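/- arXiv:1304.7038 — 3 statements merged into one kernel-verified Lean document; each statement's English description precedes it below -/
import Mathlib

section
/- Let k ≥ 1, B ≥ 1 be integers and let x, x' : {0,…,k−1} → ℤ be offset functions. If the staggler associated with x equals the translate v + (staggler associated with x') for some vector v ∈ ℤ², then x(i+1) − x(i) = x'(i+1) − x'(i) for all 0 ≤ i < k − 1. In particular, distinct sequences of consecutive offset differences yield stagglers that are distinct even up to translation. -/
/-- The staggler with `k` bars of width `B` and offsets `x`:
`⋃_{i=0}^{k−1} { (t, i) : x i ≤ t < x i + B }`. -/
def stagglerSet (k B : ℕ) (x : ℕ → ℤ) : Set (ℤ × ℤ) :=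
  { p | ∃ i : ℕ, i < k ∧ p.2 = (i : ℤ) ∧ x i ≤ p.1 ∧ p.1 < x i + (B : ℤ) }

/-- if the staggler of `x` is a translate of the staggler of `x'`,
then `x` and `x'` have the same sequence of consecutive offset differences. -/
theorem staggler_translate_unique (k B : ℕ) (hk : 1 ≤ k) (hB : 1 ≤ B)
    (x x' : ℕ → ℤ) (v : ℤ × ℤ)
    (h : stagglerSet k B x = (fun p => v + p) '' stagglerSet k B x') :
    ∀ i : ℕ, i + 1 < k → x (i + 1) - x i = x' (i + 1) - x' i := by
  have hBpos : (0:ℤ) < (B:ℤ) := by exact_mod_cast hB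
  have hmem : ∀ i : ℕ, i < k → ∀ y : ℕ → ℤ, ((y i, (i:ℤ)) : ℤ × ℤ) ∈ stagglerSet k B y := by
    intro i hi y
    exact ⟨i, hi, rfl, le_refl _, by linarith⟩
  -- v.2 = 0
  have hv2 : v.2 = 0 := by
    -- lower bound: (x' 0, 0) ∈ staggler x', so v + it ∈ staggler x
    have h1 : ((v.1 + x' 0, v.2) : ℤ × ℤ) ∈ stagglerSet k B x := by
      rw [h]
      exact ⟨(x' 0, (0:ℤ)), by simpa using hmem 0 hk x', by simp [Prod.ext_iff]⟩
    obtain ⟨j, hj, hj2, -, -⟩ := h1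
    -- upper bound: (x 0, 0) ∈ staggler x = translate
    have h2 : ((x 0, (0:ℤ)) : ℤ × ℤ) ∈ (fun p => v + p) '' stagglerSet k B x' := by
      rw [← h]; simpa using hmem 0 hk x
    obtain ⟨p, ⟨j', hj', hj'2, -, -⟩, hp⟩ := h2
    have hpe : v.2 + p.2 = 0 := congrArg Prod.snd hp
    simp only at hj2
    have : (0:ℤ) ≤ (j:ℤ) := Int.ofNat_nonneg j
    have : (0:ℤ) ≤ (j':ℤ) := Int.ofNat_nonneg j'
    omega
  -- x i = v.1 + x' i for i < k
  have key : ∀ i : ℕ, i < k → x i = v.1 + x' i := by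
    intro i hi
    -- ≥ direction
    have h2 : ((x i, (i:ℤ)) : ℤ × ℤ) ∈ (fun p => v + p) '' stagglerSet k B x' := by
      rw [← h]; exact hmem i hi x
    obtain ⟨p, ⟨j, hj, hj2, hle, hlt⟩, hp⟩ := h2
    have hp1 : v.1 + p.1 = x i := congrArg Prod.fst hp
    have hp2 : v.2 + p.2 = (i:ℤ) := congrArg Prod.snd hp
    have hji : j = i := by
      have : (j:ℤ) = (i:ℤ) := by rw [← hj2]; omega
      exact_mod_cast this
    rw [hji] at hle
    -- ≤ direction
    have h1 : ((v.1 + x' i, (i:ℤ)) : ℤ × ℤ) ∈ stagglerSet k B x := by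
      rw [h]
      exact ⟨(x' i, (i:ℤ)), hmem i hi x', by simp [Prod.ext_iff, hv2]⟩
    obtain ⟨j', hj', hj'2, hle', hlt'⟩ := h1
    have hji' : j' = i := by
      have : (j':ℤ) = (i:ℤ) := hj'2.symm
      exact_mod_cast this
    rw [hji'] at hle'
    omega
  intro i hi
  have h1 := key i (by omega)
  have h2 := key (i + 1) hi
  omega
end

section
/- Let c ≥ 1 be an integer and let P ⊆ ℤ² be a finite set generated by a binary generation sequence of size L. Then the c-scaled shape {(c·p₁ + r, c·p₂ + s) : (p₁, p₂) ∈ P, 0 ≤ r < c, 0 ≤ s < c} is generated by a binary generation sequence of size at most L + 4⌊log₂ c⌋ + 1. (This underlies the paper's remarks that its grammar-size results persist for polynomially scaled shapes, with only an additive O(log c) increase in grammar size.) -/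
/-- Translate of a finite set of cells: `u + S`. -/
def translateCells (u : ℤ × ℤ) (S : Finset (ℤ × ℤ)) : Finset (ℤ × ℤ) :=
  S.image (fun p => u + p)

/-- `S 0, S 1, …, S L` is a binary generation sequence: `S 0 = {(0,0)}` and each
subsequent set is a disjoint union of two translates of earlier sets. -/
def IsBinGenSeq (S : ℕ → Finset (ℤ × ℤ)) (L : ℕ) : Prop :=
  S 0 = {((0 : ℤ), (0 : ℤ))} ∧
    ∀ i : ℕ, 1 ≤ i → i ≤ L → ∃ j l : ℕ, ∃ u v : ℤ × ℤ,
      j < i ∧ l < i ∧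
      Disjoint (translateCells u (S j)) (translateCells v (S l)) ∧
      S i = translateCells u (S j) ∪ translateCells v (S l)

/-- `P` is generated by a binary generation sequence of size `L`. -/
def GeneratedBy (P : Finset (ℤ × ℤ)) (L : ℕ) : Prop :=
  ∃ S : ℕ → Finset (ℤ × ℤ), IsBinGenSeq S L ∧ S L = P

/-- The `c`-scaled version of a shape `P ⊆ ℤ²`: each cell is replaced by a
`c × c` block of cells. -/
noncomputable def scaleCells (c : ℕ) (P : Finset (ℤ × ℤ)) : Finset (ℤ × ℤ) :=
  P.biUnion (fun p =>
    ((Finset.Ico (0 : ℤ) (c : ℤ)) ×ˢ (Finset.Ico (0 : ℤ) (c : ℤ))).image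
      (fun q => ((c : ℤ) * p.1 + q.1, (c : ℤ) * p.2 + q.2)))

/-!
A family of shapes with `F (a + b) = F a ∪ (t a + F b)`, the union being disjoint, reaches `F k`
from `F 1` in at most `2⌊log₂ k⌋` steps: double, and join one more copy of `F 1` for each odd
binary digit of `k`. The `k × 1` rows and the `c × k` rectangles are such families, so the
`c × c` square, which is the scaling of the starting cell, takes `4⌊log₂ c⌋` steps. Scaling by
`c` turns each step `(u + S') ∪ (v + S'')` of the given sequence into the step
`(cu + cS') ∪ (cv + cS'')`, so the given sequence can then be replayed on top of the square.
-/

theorem mem_translateCells {u x : ℤ × ℤ} {S : Finset (ℤ × ℤ)} :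
    x ∈ translateCells u S ↔ x - u ∈ S := by
  simp only [translateCells, Finset.mem_image]
  constructor
  · rintro ⟨p, hp, rfl⟩
    simpa using hp
  · exact fun h => ⟨x - u, h, by abel⟩

@[simp]
theorem translateCells_zero (S : Finset (ℤ × ℤ)) : translateCells 0 S = S := by
  ext x
  simp [mem_translateCells]

section Generation

def IsJoinBefore (S : ℕ → Finset (ℤ × ℤ)) (i : ℕ) (X : Finset (ℤ × ℤ)) : Prop :=
  ∃ j l : ℕ, ∃ u v : ℤ × ℤ, j < i ∧ l < i ∧
    Disjoint (translateCells u (S j)) (translateCells v (S l)) ∧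
    X = translateCells u (S j) ∪ translateCells v (S l)

def IsGenSeqFrom (B : Finset (ℤ × ℤ)) (S : ℕ → Finset (ℤ × ℤ)) (L : ℕ) : Prop :=
  S 0 = B ∧ ∀ i : ℕ, 1 ≤ i → i ≤ L → IsJoinBefore S i (S i)

def GeneratedFrom (B X : Finset (ℤ × ℤ)) (L : ℕ) : Prop :=
  ∃ S : ℕ → Finset (ℤ × ℤ), IsGenSeqFrom B S L ∧ S L = X

theorem generatedBy_iff_generatedFrom (P : Finset (ℤ × ℤ)) (L : ℕ) :
    GeneratedBy P L ↔ GeneratedFrom {((0 : ℤ), (0 : ℤ))} P L :=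
  Iff.rfl

variable {S T : ℕ → Finset (ℤ × ℤ)} {A B C X : Finset (ℤ × ℤ)} {i m n : ℕ}

theorem IsJoinBefore.reindex (h : IsJoinBefore S i X) (f : ℕ → ℕ) {i' : ℕ}
    (hf : ∀ j < i, f j < i') (hT : ∀ j < i, T (f j) = S j) : IsJoinBefore T i' X := by
  obtain ⟨j, l, u, v, hj, hl, hdisj, rfl⟩ := h
  exact ⟨f j, f l, u, v, hf j hj, hf l hl, by rwa [hT j hj, hT l hl], by rw [hT j hj, hT l hl]⟩

theorem IsJoinBefore.map (h : IsJoinBefore S i X) (f : Finset (ℤ × ℤ) → Finset (ℤ × ℤ))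
    (g : ℤ × ℤ → ℤ × ℤ) (hf_translate : ∀ u Y, f (translateCells u Y) = translateCells (g u) (f Y))
    (hf_union : ∀ Y Z, f (Y ∪ Z) = f Y ∪ f Z)
    (hf_disjoint : ∀ Y Z, Disjoint Y Z → Disjoint (f Y) (f Z)) :
    IsJoinBefore (fun k => f (S k)) i (f X) := by
  obtain ⟨j, l, u, v, hj, hl, hdisj, rfl⟩ := h
  refine ⟨j, l, g u, g v, hj, hl, ?_, ?_⟩
  · simpa only [hf_translate] using hf_disjoint _ _ hdisj
  · rw [hf_union, hf_translate, hf_translate]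

theorem IsGenSeqFrom.snoc (hS : IsGenSeqFrom B S n) (hX : IsJoinBefore S (n + 1) X) :
    IsGenSeqFrom B (fun k => if k ≤ n then S k else X) (n + 1) := by
  refine ⟨by simpa using hS.1, fun k hk₁ hk => ?_⟩
  have agree : ∀ j < k, (if j ≤ n then S j else X) = S j := fun j hj => if_pos (by omega)
  dsimp only
  rcases Nat.lt_or_ge n k with hnk | hkn
  · obtain rfl : k = n + 1 := by omega
    rw [if_neg (by omega)]
    exact hX.reindex id (fun j hj => hj) agree
  · rw [if_pos hkn]
    exact (hS.2 k hk₁ hkn).reindex id (fun j hj => hj) agree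

theorem GeneratedFrom.union_translate_self (h : GeneratedFrom B X n) {u : ℤ × ℤ}
    (hdisj : Disjoint X (translateCells u X)) :
    GeneratedFrom B (X ∪ translateCells u X) (n + 1) := by
  obtain ⟨S, hS, rfl⟩ := h
  exact ⟨fun k => if k ≤ n then S k else S n ∪ translateCells u (S n),
    hS.snoc ⟨n, n, 0, u, by omega, by omega, by simpa using hdisj, by simp⟩, by simp⟩

theorem GeneratedFrom.union_translate_base (h : GeneratedFrom B X n) {u : ℤ × ℤ}
    (hdisj : Disjoint X (translateCells u B)) :
    GeneratedFrom B (X ∪ translateCells u B) (n + 1) := by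
  obtain ⟨S, hS, rfl⟩ := h
  exact ⟨fun k => if k ≤ n then S k else S n ∪ translateCells u B,
    hS.snoc ⟨n, 0, 0, u, by omega, by omega, by simpa [hS.1] using hdisj, by simp [hS.1]⟩,
    by simp⟩

theorem GeneratedFrom.trans (hAB : GeneratedFrom A B m) (hBC : GeneratedFrom B C n) :
    GeneratedFrom A C (m + n) := by
  obtain ⟨S, ⟨hS₀, hS⟩, hSm⟩ := hAB
  obtain ⟨T, ⟨hT₀, hT⟩, rfl⟩ := hBC
  set U : ℕ → Finset (ℤ × ℤ) := fun k => if k ≤ m then S k else T (k - m)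
  have hU_left : ∀ k ≤ m, U k = S k := fun k hk => if_pos hk
  have hU_right : ∀ k, U (m + k) = T k := by
    rintro (_ | k)
    · simp [U, hSm, hT₀]
    · simp [U]
  refine ⟨U, ⟨by simp [U, hS₀], fun k hk₁ hk => ?_⟩, hU_right n⟩
  rcases Nat.lt_or_ge m k with hmk | hkm
  · obtain ⟨k, rfl⟩ := Nat.exists_eq_add_of_le hmk.le
    rw [hU_right]
    exact (hT k (by omega) (by omega)).reindex (m + ·) (fun j hj => by omega)
      (fun j _ => hU_right j)
  · rw [hU_left k hkm]
    exact (hS k hk₁ hkm).reindex id (fun j hj => hj) (fun j hj => hU_left j (by omega))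

theorem GeneratedFrom.map (h : GeneratedFrom B X n) (f : Finset (ℤ × ℤ) → Finset (ℤ × ℤ))
    (g : ℤ × ℤ → ℤ × ℤ) (hf_translate : ∀ u Y, f (translateCells u Y) = translateCells (g u) (f Y))
    (hf_union : ∀ Y Z, f (Y ∪ Z) = f Y ∪ f Z)
    (hf_disjoint : ∀ Y Z, Disjoint Y Z → Disjoint (f Y) (f Z)) :
    GeneratedFrom (f B) (f X) n := by
  obtain ⟨S, ⟨hS₀, hS⟩, rfl⟩ := h
  exact ⟨fun k => f (S k), ⟨congrArg f hS₀,
    fun k hk₁ hk => (hS k hk₁ hk).map f g hf_translate hf_union hf_disjoint⟩, rfl⟩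

theorem exists_generatedFrom_of_translate_add (F : ℕ → Finset (ℤ × ℤ)) (t : ℕ → ℤ × ℤ)
    (hF_disjoint : ∀ a b, Disjoint (F a) (translateCells (t a) (F b)))
    (hF_add : ∀ a b, F (a + b) = F a ∪ translateCells (t a) (F b)) (k : ℕ) (hk : 1 ≤ k) :
    ∃ n ≤ 2 * Nat.log 2 k, GeneratedFrom (F 1) (F k) n := by
  induction k using Nat.evenOddRec with
  | h0 => omega
  | h_even q ih =>
    obtain ⟨n, hn, h⟩ := ih (by omega)
    have hlog : Nat.log 2 (2 * q) = Nat.log 2 q + 1 := by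
      rw [mul_comm]; exact Nat.log_mul_base one_lt_two (by omega)
    refine ⟨n + 1, by omega, ?_⟩
    rw [two_mul, hF_add]
    exact h.union_translate_self (hF_disjoint q q)
  | h_odd q ih =>
    rcases Nat.eq_zero_or_pos q with rfl | hq
    · exact ⟨0, by omega, ⟨fun _ => F 1, ⟨rfl, by omega⟩, rfl⟩⟩
    obtain ⟨n, hn, h⟩ := ih hq
    have hlog : Nat.log 2 (2 * q + 1) = Nat.log 2 q + 1 := by
      rw [Nat.log_of_one_lt_of_le one_lt_two (by omega)]; congr 2; omega
    refine ⟨n + 2, by omega, ?_⟩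
    rw [hF_add]
    refine GeneratedFrom.union_translate_base ?_ (hF_disjoint (2 * q) 1)
    rw [two_mul, hF_add]
    exact h.union_translate_self (hF_disjoint q q)

end Generation

section Rectangles

noncomputable def rectCells (a b : ℕ) : Finset (ℤ × ℤ) :=
  Finset.Ico 0 (a : ℤ) ×ˢ Finset.Ico 0 (b : ℤ)

theorem mem_rectCells {a b : ℕ} {x : ℤ × ℤ} :
    x ∈ rectCells a b ↔ 0 ≤ x.1 ∧ x.1 < a ∧ 0 ≤ x.2 ∧ x.2 < b := by
  simp only [rectCells, Finset.mem_product, Finset.mem_Ico, and_assoc]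

theorem rectCells_one_one : rectCells 1 1 = {((0 : ℤ), (0 : ℤ))} := by
  ext x
  simp only [mem_rectCells, Finset.mem_singleton, Prod.ext_iff]
  omega

variable (a b n : ℕ)

theorem rectCells_add_left :
    rectCells (a + b) n = rectCells a n ∪ translateCells ((a : ℤ), 0) (rectCells b n) := by
  ext x
  simp only [Finset.mem_union, mem_translateCells, mem_rectCells, Prod.fst_sub, Prod.snd_sub]
  omega

theorem disjoint_rectCells_add_left :
    Disjoint (rectCells a n) (translateCells ((a : ℤ), 0) (rectCells b n)) := by
  refine Finset.disjoint_left.mpr fun x hx hx' => ?_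
  simp only [mem_translateCells, mem_rectCells, Prod.fst_sub, Prod.snd_sub] at hx hx'
  omega

theorem rectCells_add_right :
    rectCells n (a + b) = rectCells n a ∪ translateCells (0, (a : ℤ)) (rectCells n b) := by
  ext x
  simp only [Finset.mem_union, mem_translateCells, mem_rectCells, Prod.fst_sub, Prod.snd_sub]
  omega

theorem disjoint_rectCells_add_right :
    Disjoint (rectCells n a) (translateCells (0, (a : ℤ)) (rectCells n b)) := by
  refine Finset.disjoint_left.mpr fun x hx hx' => ?_
  simp only [mem_translateCells, mem_rectCells, Prod.fst_sub, Prod.snd_sub] at hx hx'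
  omega

end Rectangles

section Scaling

variable {c : ℕ}

theorem mem_scaleCells (hc : 0 < c) {P : Finset (ℤ × ℤ)} {x : ℤ × ℤ} :
    x ∈ scaleCells c P ↔ (x.1 / c, x.2 / c) ∈ P := by
  have hc' : (0 : ℤ) < c := by exact_mod_cast hc
  have div_eq : ∀ p r : ℤ, 0 ≤ r → r < c → (c * p + r) / c = p := fun p r hr₀ hr => by
    rw [add_comm, Int.add_mul_ediv_left _ _ hc'.ne', Int.ediv_eq_zero_of_lt hr₀ hr, zero_add]
  simp only [scaleCells, Finset.mem_biUnion, Finset.mem_image, Finset.mem_product,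
    Finset.mem_Ico]
  constructor
  · rintro ⟨p, hp, q, ⟨⟨hq₁, hq₁'⟩, hq₂, hq₂'⟩, rfl⟩
    simpa [div_eq _ _ hq₁ hq₁', div_eq _ _ hq₂ hq₂'] using hp
  · intro hx
    refine ⟨_, hx, (x.1 % c, x.2 % c), ⟨⟨Int.emod_nonneg _ hc'.ne', Int.emod_lt_of_pos _ hc'⟩,
      Int.emod_nonneg _ hc'.ne', Int.emod_lt_of_pos _ hc'⟩, ?_⟩
    simp [Int.mul_ediv_add_emod]

theorem scaleCells_union (c : ℕ) (A B : Finset (ℤ × ℤ)) :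
    scaleCells c (A ∪ B) = scaleCells c A ∪ scaleCells c B :=
  Finset.union_biUnion

theorem disjoint_scaleCells (hc : 0 < c) {A B : Finset (ℤ × ℤ)} (h : Disjoint A B) :
    Disjoint (scaleCells c A) (scaleCells c B) :=
  Finset.disjoint_left.mpr fun _ hA hB =>
    Finset.disjoint_left.mp h ((mem_scaleCells hc).mp hA) ((mem_scaleCells hc).mp hB)

theorem scaleCells_translateCells (hc : 0 < c) (u : ℤ × ℤ) (S : Finset (ℤ × ℤ)) :
    scaleCells c (translateCells u S) = translateCells ((c : ℤ) • u) (scaleCells c S) := by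
  have hc' : (c : ℤ) ≠ 0 := by exact_mod_cast hc.ne'
  ext x
  simp only [mem_scaleCells hc, mem_translateCells, Prod.fst_sub, Prod.snd_sub, Prod.smul_fst,
    Prod.smul_snd, smul_eq_mul, Int.sub_mul_ediv_left _ _ hc']
  rfl

theorem scaleCells_singleton_zero (c : ℕ) :
    scaleCells c {((0 : ℤ), (0 : ℤ))} = rectCells c c := by
  simp [scaleCells, rectCells]

theorem GeneratedFrom.scaleCells (hc : 0 < c) {B X : Finset (ℤ × ℤ)} {n : ℕ}
    (h : GeneratedFrom B X n) : GeneratedFrom (scaleCells c B) (scaleCells c X) n :=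
  h.map _ _ (scaleCells_translateCells hc) (scaleCells_union c) fun _ _ => disjoint_scaleCells hc

end Scaling

/-- if `P` is generated by a binary generation sequence of size `L`,
then its `c`-scaled version is generated by a binary generation sequence of size
at most `L + 4⌊log₂ c⌋ + 1`. -/
theorem scaled_shape_generated (c : ℕ) (hc : 1 ≤ c) (P : Finset (ℤ × ℤ)) (L : ℕ)
    (hP : GeneratedBy P L) :
    ∃ L' : ℕ, L' ≤ L + 4 * Nat.log 2 c + 1 ∧ GeneratedBy (scaleCells c P) L' := by
  obtain ⟨n₁, hn₁, row⟩ := exists_generatedFrom_of_translate_add (fun k => rectCells k 1)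
    (fun a => ((a : ℤ), 0)) (fun a b => disjoint_rectCells_add_left a b 1)
    (fun a b => rectCells_add_left a b 1) c hc
  obtain ⟨n₂, hn₂, square⟩ := exists_generatedFrom_of_translate_add (rectCells c)
    (fun a => (0, (a : ℤ))) (disjoint_rectCells_add_right · · c) (rectCells_add_right · · c) c hc
  have scaled : GeneratedFrom (rectCells c c) (scaleCells c P) L := by
    simpa only [scaleCells_singleton_zero] using
      ((generatedBy_iff_generatedFrom P L).mp hP).scaleCells hc
  refine ⟨n₁ + n₂ + L, by omega, ?_⟩
  rw [generatedBy_iff_generatedFrom, ← rectCells_one_one]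
  exact (row.trans square).trans scaled
end

section
/- Let m ∈ ℕ and let i ≤ j be natural numbers with j < 2^m. Then there exists a finite set D of pairs (h, a) ∈ ℕ × ℕ such that the dyadic intervals I_{(h,a)} = {a·2^h, a·2^h + 1, …, (a+1)·2^h − 1} for (h, a) ∈ D are pairwise disjoint, their union equals {i, i+1, …, j}, D contains at most two pairs with any given first coordinate h, and card(D) ≤ 2m + 1. -/
/-- The dyadic interval `I_(h,a) = {a·2^h, a·2^h + 1, …, (a+1)·2^h − 1}`. -/
def dyadicInterval (p : ℕ × ℕ) : Finset ℕ :=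
  Finset.Ico (p.2 * 2 ^ p.1) ((p.2 + 1) * 2 ^ p.1)

lemma dyadic_zero (a : ℕ) : dyadicInterval (0, a) = {a} := by
  ext n
  simp [dyadicInterval]

lemma mem_dyadic_succ {h a n : ℕ} :
    n ∈ dyadicInterval (h + 1, a) ↔ n / 2 ∈ dyadicInterval (h, a) := by
  simp only [dyadicInterval, Finset.mem_Ico, pow_succ, ← mul_assoc]
  generalize a * 2 ^ h = A
  generalize (a + 1) * 2 ^ h = B
  omega

/-- Shifting a decomposition of `Icc u v` up by one level yields a decomposition
of `Icc (2u) (2v+1)` with all heights positive. -/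
lemma shift_decomp (u v : ℕ) (D' : Finset (ℕ × ℕ))
    (h1 : ∀ p ∈ D', ∀ q ∈ D', p ≠ q → Disjoint (dyadicInterval p) (dyadicInterval q))
    (h2 : D'.biUnion dyadicInterval = Finset.Icc u v)
    (h3 : ∀ h : ℕ, (D'.filter (fun p => p.1 = h)).card ≤ 2) :
    ∃ D : Finset (ℕ × ℕ),
      (∀ p ∈ D, ∀ q ∈ D, p ≠ q → Disjoint (dyadicInterval p) (dyadicInterval q)) ∧
      D.biUnion dyadicInterval = Finset.Icc (2 * u) (2 * v + 1) ∧
      (∀ p ∈ D, p.1 ≠ 0) ∧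
      (∀ h : ℕ, (D.filter (fun p => p.1 = h)).card ≤ 2) ∧
      D.card = D'.card := by
  classical
  set f : ℕ × ℕ → ℕ × ℕ := fun p => (p.1 + 1, p.2) with hf
  have hinj : Function.Injective f := by
    intro p q hpq
    simp only [hf, Prod.ext_iff] at hpq
    exact Prod.ext (by omega) hpq.2
  have hmem : ∀ (p : ℕ × ℕ) (n : ℕ), n ∈ dyadicInterval (f p) ↔ n / 2 ∈ dyadicInterval p := by
    intro p n
    exact mem_dyadic_succ (h := p.1) (a := p.2)
  refine ⟨D'.image f, ?_, ?_, ?_, ?_, Finset.card_image_of_injective _ hinj⟩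
  · intro p hp q hq hne
    obtain ⟨p', hp', rfl⟩ := Finset.mem_image.mp hp
    obtain ⟨q', hq', rfl⟩ := Finset.mem_image.mp hq
    have hne' : p' ≠ q' := fun h => hne (by rw [h])
    have hd := h1 p' hp' q' hq' hne'
    rw [Finset.disjoint_left] at hd ⊢
    intro n hn hn2
    exact hd ((hmem p' n).mp hn) ((hmem q' n).mp hn2)
  · ext n
    rw [Finset.image_biUnion]
    have : (∃ p ∈ D', n / 2 ∈ dyadicInterval p) ↔ n / 2 ∈ Finset.Icc u v := by
      rw [← h2]; simp [Finset.mem_biUnion]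
    simp only [Finset.mem_biUnion, hmem, Finset.mem_Icc]
    rw [show (∃ p ∈ D', n / 2 ∈ dyadicInterval p) ↔ u ≤ n / 2 ∧ n / 2 ≤ v from
      this.trans Finset.mem_Icc]
    omega
  · intro p hp
    obtain ⟨p', _, rfl⟩ := Finset.mem_image.mp hp
    simp [hf]
  · intro h
    rw [Finset.filter_image]
    have hcard := Finset.card_image_le (s := D'.filter fun a => (f a).1 = h) (f := f)
    refine le_trans hcard ?_
    cases h with
    | zero =>
      have : (D'.filter fun a => (f a).1 = 0) = ∅ := by
        apply Finset.filter_eq_empty_iff.mpr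
        intro p _
        simp [hf]
      simp [this]
    | succ k =>
      have : (D'.filter fun a => (f a).1 = k + 1) = D'.filter (fun p => p.1 = k) := by
        apply Finset.filter_congr
        intro p _
        simp [hf]
      rw [this]
      exact h3 k

/-- Inserting a singleton dyadic interval `{x}` (with `x` outside the current union)
into a decomposition. -/
lemma insert_decomp (x c : ℕ) (D0 : Finset (ℕ × ℕ)) (S : Finset ℕ)
    (h1 : ∀ p ∈ D0, ∀ q ∈ D0, p ≠ q → Disjoint (dyadicInterval p) (dyadicInterval q))
    (h2 : D0.biUnion dyadicInterval = S)
    (hx : x ∉ S)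
    (hc : (D0.filter (fun p => p.1 = 0)).card ≤ c) :
    (∀ p ∈ insert (0, x) D0, ∀ q ∈ insert (0, x) D0, p ≠ q →
        Disjoint (dyadicInterval p) (dyadicInterval q)) ∧
    (insert (0, x) D0).biUnion dyadicInterval = insert x S ∧
    ((insert (0, x) D0).filter (fun p => p.1 = 0)).card ≤ c + 1 ∧
    (∀ h : ℕ, h ≠ 0 → ((insert (0, x) D0).filter (fun p => p.1 = h)) =
        D0.filter (fun p => p.1 = h)) ∧
    (insert (0, x) D0).card ≤ D0.card + 1 := by
  classical
  have hxnot : ∀ q ∈ D0, x ∉ dyadicInterval q := by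
    intro q hq hxq
    exact hx (h2 ▸ Finset.mem_biUnion.mpr ⟨q, hq, hxq⟩)
  refine ⟨?_, ?_, ?_, ?_, Finset.card_insert_le _ _⟩
  · intro p hp q hq hne
    rcases Finset.mem_insert.mp hp with rfl | hp' <;>
      rcases Finset.mem_insert.mp hq with rfl | hq'
    · exact absurd rfl hne
    · rw [dyadic_zero, Finset.disjoint_singleton_left]
      exact hxnot q hq'
    · rw [dyadic_zero, Finset.disjoint_singleton_right]
      exact hxnot p hp'
    · exact h1 p hp' q hq' hne
  · rw [Finset.biUnion_insert, h2, dyadic_zero, ← Finset.insert_eq]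
  · rw [Finset.filter_insert]
    simp only [if_pos rfl]
    exact le_trans (Finset.card_insert_le _ _) (by omega)
  · intro h hne
    rw [Finset.filter_insert, if_neg (by simpa using (Ne.symm hne))]

/-- every interval `{i, …, j}` with `j < 2^m` decomposes into
pairwise disjoint dyadic intervals, at most two of each height `h`, and at most
`2m + 1` intervals in total. -/
theorem dyadic_decomposition (m i j : ℕ) (hij : i ≤ j) (hj : j < 2 ^ m) :
    ∃ D : Finset (ℕ × ℕ),
      (∀ p ∈ D, ∀ q ∈ D, p ≠ q → Disjoint (dyadicInterval p) (dyadicInterval q)) ∧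
      D.biUnion dyadicInterval = Finset.Icc i j ∧
      (∀ h : ℕ, (D.filter (fun p => p.1 = h)).card ≤ 2) ∧
      D.card ≤ 2 * m + 1 := by
  classical
  induction m generalizing i j with
  | zero =>
    have : j = 0 := by simpa using Nat.lt_one_iff.mp (by simpa using hj)
    subst this
    have : i = 0 := Nat.le_zero.mp hij
    subst this
    refine ⟨{(0, 0)}, ?_, ?_, ?_, ?_⟩
    · intro p hp q hq hne
      simp only [Finset.mem_singleton] at hp hq
      exact absurd (hp.trans hq.symm) hne
    · rw [Finset.singleton_biUnion, dyadic_zero, Finset.Icc_self]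
    · intro h
      exact le_trans (Finset.card_filter_le _ _) (by simp)
    · simp
  | succ m IH =>
    -- core construction: for even `u` and odd `v`, shift the decomposition of
    -- `Icc (u/2) (v/2)` up one level
    have core : ∀ u v : ℕ, u ≤ v → v < 2 ^ (m + 1) → 2 ∣ u → ¬ 2 ∣ v →
        ∃ D : Finset (ℕ × ℕ),
          (∀ p ∈ D, ∀ q ∈ D, p ≠ q → Disjoint (dyadicInterval p) (dyadicInterval q)) ∧
          D.biUnion dyadicInterval = Finset.Icc u v ∧
          (∀ p ∈ D, p.1 ≠ 0) ∧
          (∀ h : ℕ, (D.filter (fun p => p.1 = h)).card ≤ 2) ∧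
          D.card ≤ 2 * m + 1 := by
      intro u v huv hv hu2 hv2
      have hv' : v / 2 < 2 ^ m := by
        rw [pow_succ] at hv; omega
      obtain ⟨D', hd1, hd2, hd3, hd4⟩ := IH (u / 2) (v / 2) (Nat.div_le_div_right huv) hv'
      obtain ⟨D, g1, g2, g3, g4, g5⟩ := shift_decomp _ _ D' hd1 hd2 hd3
      refine ⟨D, g1, ?_, g3, g4, by omega⟩
      rw [g2]
      congr 1 <;> omega
    have filter0_zero : ∀ D : Finset (ℕ × ℕ), (∀ p ∈ D, p.1 ≠ 0) →
        (D.filter (fun p => p.1 = 0)).card ≤ 0 := by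
      intro D hD
      have : D.filter (fun p => p.1 = 0) = ∅ :=
        Finset.filter_eq_empty_iff.mpr fun p hp => hD p hp
      simp [this]
    rcases eq_or_lt_of_le hij with rfl | hlt
    · -- single element
      refine ⟨{(0, i)}, ?_, ?_, ?_, ?_⟩
      · intro p hp q hq hne
        simp only [Finset.mem_singleton] at hp hq
        exact absurd (hp.trans hq.symm) hne
      · rw [Finset.singleton_biUnion, dyadic_zero, Finset.Icc_self]
      · intro h
        exact le_trans (Finset.card_filter_le _ _) (by simp)
      · simp
    · by_cases hi : 2 ∣ i <;> by_cases hjd : 2 ∣ j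
      · -- i even, j even : decompose Icc i (j-1), insert (0, j)
        obtain ⟨D0, g1, g2, g3, g4, g5⟩ := core i (j - 1) (by omega) (by omega) hi (by omega)
        obtain ⟨k1, k2, k3, k4, k5⟩ := insert_decomp j 0 D0 _ g1 g2
          (by simp only [Finset.mem_insert, Finset.mem_Icc]; omega) (filter0_zero D0 g3)
        refine ⟨insert (0, j) D0, k1, ?_, ?_, ?_⟩
        · rw [k2]; ext n; simp only [Finset.mem_insert, Finset.mem_Icc]; omega
        · intro h
          rcases Nat.eq_zero_or_pos h with rfl | hpos
          · omega
          · rw [k4 h (by omega)]; exact g4 h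
        · omega
      · -- i even, j odd : direct core
        obtain ⟨D, g1, g2, _, g4, g5⟩ := core i j hij hj hi hjd
        exact ⟨D, g1, g2, g4, by omega⟩
      · -- i odd, j even
        rcases eq_or_lt_of_le (show i + 1 ≤ j by omega) with hji | hji
        · -- j = i + 1 : two singletons
          refine ⟨{(0, i), (0, j)}, ?_, ?_, ?_, ?_⟩
          · intro p hp q hq hne
            have hij' : i ≠ j := by omega
            simp only [Finset.mem_insert, Finset.mem_singleton] at hp hq
            rcases hp with rfl | rfl <;> rcases hq with rfl | rfl <;>
              first
                | exact absurd rfl hne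
                | (rw [dyadic_zero, dyadic_zero, Finset.disjoint_singleton_left];
                   simp; omega)
          · ext n
            simp [dyadic_zero, Finset.mem_Icc]
            omega
          · intro h
            refine le_trans (Finset.card_filter_le _ _) ?_
            exact le_trans (Finset.card_insert_le _ _) (by simp)
          · refine le_trans (Finset.card_insert_le _ _) ?_
            simp; omega
        · -- i + 1 ≤ j - 1 : core on Icc (i+1) (j-1), insert both endpoints
          obtain ⟨D0, g1, g2, g3, g4, g5⟩ := core (i + 1) (j - 1) (by omega) (by omega)
            (by omega) (by omega)
          obtain ⟨k1, k2, k3, k4, k5⟩ := insert_decomp i 0 D0 _ g1 g2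
            (by simp only [Finset.mem_insert, Finset.mem_Icc]; omega) (filter0_zero D0 g3)
          obtain ⟨l1, l2, l3, l4, l5⟩ := insert_decomp j 1 (insert (0, i) D0) _ k1 k2
            (by simp only [Finset.mem_insert, Finset.mem_Icc]; omega) k3
          refine ⟨insert (0, j) (insert (0, i) D0), l1, ?_, ?_, ?_⟩
          · rw [l2]; ext n; simp only [Finset.mem_insert, Finset.mem_Icc]; omega
          · intro h
            rcases Nat.eq_zero_or_pos h with rfl | hpos
            · omega
            · rw [l4 h (by omega), k4 h (by omega)]; exact g4 h
          · omega
      · -- i odd, j odd : core on Icc (i+1) j, insert (0, i)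
        obtain ⟨D0, g1, g2, g3, g4, g5⟩ := core (i + 1) j (by omega) hj (by omega) hjd
        obtain ⟨k1, k2, k3, k4, k5⟩ := insert_decomp i 0 D0 _ g1 g2
          (by simp only [Finset.mem_insert, Finset.mem_Icc]; omega) (filter0_zero D0 g3)
        refine ⟨insert (0, i) D0, k1, ?_, ?_, ?_⟩
        · rw [k2]; ext n; simp only [Finset.mem_insert, Finset.mem_Icc]; omega
        · intro h
          rcases Nat.eq_zero_or_pos h with rfl | hpos
          · omega
          · rw [k4 h (by omega)]; exact g4 h
        · omega
end
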